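/- arXiv:1608.04538 — 6 statements merged into one kernel-verified Lean document; each statement's English description precedes it below -/
import Mathlib

section
/- Let L be a closed inverse subsemigroup of an inverse semigroup S. The right cosets of L cover all of S (equivalently, they partition S) if and only if L is full, i.e. L contains every idempotent of S. -/
/-- The natural partial order on a semigroup: `a ≤ b` iff `a = e * b` for some
idempotent `e`. -/
def NatLe {S : Type} [Mul S] (a b : S) : Prop := ∃ e : S, e * e = e ∧ a = e * b

/-- for a closed inverse subsemigroup `L` of an inverse semigroup `S`,
the right cosets of `L` cover all of `S` iff `L` is full (contains every idempotent). -/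
theorem stmt_3 {S : Type} [Semigroup S] (inv : S → S)
    (hinv : ∀ x : S, x * inv x * x = x ∧ inv x * x * inv x = inv x)
    (huniq : ∀ x y : S, (x * y * x = x ∧ y * x * y = y) → y = inv x)
    (L : Set S) (hne : L.Nonempty)
    (hmul : ∀ a ∈ L, ∀ b ∈ L, a * b ∈ L)
    (hLinv : ∀ a ∈ L, inv a ∈ L)
    (hclosed : ∀ a ∈ L, ∀ s : S, NatLe a s → s ∈ L) :
    (∀ s : S, ∃ t : S, t * inv t ∈ L ∧ ∃ x ∈ L, NatLe (x * t) s) ↔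
      (∀ e : S, e * e = e → e ∈ L) := by
  have inv_invol : ∀ x : S, inv (inv x) = x := fun x =>
    (huniq (inv x) x ⟨(hinv x).2, (hinv x).1⟩).symm
  have idem_inv : ∀ e : S, e * e = e → inv e = e := fun e he =>
    (huniq e e ⟨by rw [he, he], by rw [he, he]⟩).symm
  have prod_idem : ∀ e f : S, e * e = e → f * f = f → (e * f) * (e * f) = e * f := by
    intro e f he hf
    set a := inv (e * f) with ha
    have hA : a * (e * f) * a = a := (hinv (e * f)).2
    have hB : (e * f) * a * (e * f) = e * f := (hinv (e * f)).1
    have h1 : (e * f) * (f * a * e) * (e * f) = e * f := by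
      calc (e * f) * (f * a * e) * (e * f)
          = (e * (f * f)) * a * ((e * e) * f) := by simp only [mul_assoc]
        _ = (e * f) * a * (e * f) := by rw [he, hf]
        _ = e * f := hB
    have h2 : (f * a * e) * (e * f) * (f * a * e) = f * a * e := by
      calc (f * a * e) * (e * f) * (f * a * e)
          = f * (a * ((e * e) * ((f * f) * (a * e)))) := by simp only [mul_assoc]
        _ = f * (a * (e * (f * (a * e)))) := by rw [he, hf]
        _ = f * (a * (e * f) * a) * e := by simp only [mul_assoc]
        _ = f * a * e := by rw [hA]
    have haeq : f * a * e = a := by rw [huniq (e * f) (f * a * e) ⟨h1, h2⟩]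
    have aidem : a * a = a := by
      calc a * a = (f * a * e) * (f * a * e) := by rw [haeq]
        _ = f * (a * (e * f) * a) * e := by simp only [mul_assoc]
        _ = f * a * e := by rw [hA]
        _ = a := haeq
    have efa : e * f = a := by rw [← idem_inv a aidem, ha, inv_invol]
    rw [efa]; exact aidem
  have idem_comm : ∀ e f : S, e * e = e → f * f = f → e * f = f * e := by
    intro e f he hf
    have h1 : (e * f) * (f * e) * (e * f) = e * f := by
      calc (e * f) * (f * e) * (e * f)
          = (e * (f * f)) * ((e * e) * f) := by simp only [mul_assoc]
        _ = (e * f) * (e * f) := by rw [he, hf]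
        _ = e * f := prod_idem e f he hf
    have h2 : (f * e) * (e * f) * (f * e) = f * e := by
      calc (f * e) * (e * f) * (f * e)
          = (f * (e * e)) * ((f * f) * e) := by simp only [mul_assoc]
        _ = (f * e) * (f * e) := by rw [he, hf]
        _ = f * e := prod_idem f e hf he
    calc e * f = inv (e * f) := (idem_inv (e * f) (prod_idem e f he hf)).symm
      _ = f * e := (huniq (e * f) (f * e) ⟨h1, h2⟩).symm
  have idemR : ∀ x : S, (x * inv x) * (x * inv x) = x * inv x := by
    intro x
    calc (x * inv x) * (x * inv x) = (x * inv x * x) * inv x := by simp only [mul_assoc]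
      _ = x * inv x := by rw [(hinv x).1]
  have idemL : ∀ x : S, (inv x * x) * (inv x * x) = inv x * x := by
    intro x
    calc (inv x * x) * (inv x * x) = (inv x * x * inv x) * x := by simp only [mul_assoc]
      _ = inv x * x := by rw [(hinv x).2]
  have mul_inv : ∀ x y : S, inv (x * y) = inv y * inv x := by
    intro x y
    have h1 : (x * y) * (inv y * inv x) * (x * y) = x * y := by
      calc (x * y) * (inv y * inv x) * (x * y)
          = x * ((y * inv y) * (inv x * x)) * y := by simp only [mul_assoc]
        _ = x * ((inv x * x) * (y * inv y)) * y := by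
              rw [idem_comm _ _ (idemR y) (idemL x)]
        _ = (x * inv x * x) * (y * inv y * y) := by simp only [mul_assoc]
        _ = x * y := by rw [(hinv x).1, (hinv y).1]
    have h2 : (inv y * inv x) * (x * y) * (inv y * inv x) = inv y * inv x := by
      calc (inv y * inv x) * (x * y) * (inv y * inv x)
          = inv y * ((inv x * x) * (y * inv y)) * inv x := by simp only [mul_assoc]
        _ = inv y * ((y * inv y) * (inv x * x)) * inv x := by
              rw [idem_comm _ _ (idemL x) (idemR y)]
        _ = (inv y * y * inv y) * (inv x * x * inv x) := by simp only [mul_assoc]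
        _ = inv y * inv x := by rw [(hinv x).2, (hinv y).2]
    exact (huniq (x * y) (inv y * inv x) ⟨h1, h2⟩).symm
  constructor
  · intro H e he
    obtain ⟨t, htL, x, hxL, g, hg, hxe⟩ := H e
    have hi : (x * t) * (x * t) = x * t := by rw [hxe]; exact prod_idem g e hg he
    have hself : inv t * inv x = x * t := by
      rw [← mul_inv, idem_inv _ hi]
    have hmem : x * t ∈ L := by
      have h1 : x * (t * inv t) ∈ L := hmul x hxL _ htL
      have h2 : (x * (t * inv t)) * inv x ∈ L := hmul _ h1 _ (hLinv x hxL)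
      have : (x * (t * inv t)) * inv x = x * t := by
        calc (x * (t * inv t)) * inv x = (x * t) * (inv t * inv x) := by
              simp only [mul_assoc]
          _ = (x * t) * (x * t) := by rw [hself]
          _ = x * t := hi
      rwa [this] at h2
    exact hclosed _ hmem e ⟨g, hg, hxe⟩
  · intro H s
    refine ⟨s, H _ (idemR s), s * inv s, H _ (idemR s), s * inv s, idemR s, ?_⟩
    calc (s * inv s) * s = (s * inv s) * s := rfl
      _ = s * inv s * s := rfl
end

section
/- Let Γ be a finite directed graph, let p be a nonempty directed circuit in Γ and let d be a directed path in Γ starting at the basepoint of p such that p and d share no nontrivial common prefix. Then the set L_{p,d} = {(vp^r d, vp^s d) : r,s ≥ 0, v a suffix of p} ∪ {(q,q) : q a suffix of d} is a closed inverse subsemigroup of the graph inverse semigroup S(Γ). -/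
/-- A (finite) directed graph: vertices, edges, and source/target maps. -/
structure DGraph where
  V : Type
  E : Type
  src : E → V
  tgt : E → V

namespace DGraph

/-- The vertex reached after traversing a list of edges from a vertex. -/
def walkEnd (G : DGraph) : G.V → List G.E → G.V
  | v, [] => v
  | _, e :: l => walkEnd G (G.tgt e) l

/-- The list of edges forms a directed walk starting at the given vertex. -/
def IsWalk (G : DGraph) : G.V → List G.E → Prop
  | _, [] => True
  | v, e :: l => G.src e = v ∧ IsWalk G (G.tgt e) l

variable (G : DGraph)

@[simp] theorem walkEnd_nil (v : G.V) : G.walkEnd v [] = v := rfl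
@[simp] theorem walkEnd_cons (v : G.V) (e : G.E) (l : List G.E) :
    G.walkEnd v (e :: l) = G.walkEnd (G.tgt e) l := rfl
@[simp] theorem isWalk_nil (v : G.V) : G.IsWalk v [] := trivial
@[simp] theorem isWalk_cons (v : G.V) (e : G.E) (l : List G.E) :
    G.IsWalk v (e :: l) ↔ G.src e = v ∧ G.IsWalk (G.tgt e) l := Iff.rfl

theorem isWalk_append (v : G.V) (l1 l2 : List G.E) :
    G.IsWalk v (l1 ++ l2) ↔ G.IsWalk v l1 ∧ G.IsWalk (G.walkEnd v l1) l2 := by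
  induction l1 generalizing v with
  | nil => simp [IsWalk, walkEnd]
  | cons e l ih => simp [IsWalk, walkEnd, ih, and_assoc]

/-- A directed path in `G`: an initial vertex together with a compatible
list of edges, traversed in order (empty paths are allowed). -/
structure DPath (G : DGraph) where
  first : G.V
  edges : List G.E
  wf : G.IsWalk first edges

namespace DPath

variable {G}

/-- The terminal vertex of a directed path. -/
def last (p : G.DPath) : G.V := G.walkEnd p.first p.edges

/-- The list of vertices lying on a directed path. -/
def vertexList (p : G.DPath) : List G.V := p.first :: p.edges.map G.tgt

/-- `q` is a suffix (terminal segment) of `p`: `p = l ⬝ q` for some edge list `l`. -/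
def IsSuffixOf (q p : G.DPath) : Prop :=
  ∃ l : List G.E, p.edges = l ++ q.edges ∧ q.first = G.walkEnd p.first l

end DPath

theorem isWalk_chopAppend {u v w : G.DPath} (hs : v.IsSuffixOf u) (hvw : v.first = w.first) :
    G.IsWalk u.first (u.edges.take (u.edges.length - v.edges.length) ++ w.edges) := by
  obtain ⟨l, hl, hfst⟩ := hs
  rw [hl]
  have hlen : (l ++ v.edges).length - v.edges.length = l.length := by simp
  rw [hlen, List.take_left, G.isWalk_append]
  have hu := u.wf
  rw [hl, G.isWalk_append] at hu
  refine ⟨hu.1, ?_⟩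
  rw [← hfst, hvw]
  exact w.wf

theorem isWalk_concat {p q : G.DPath} (h : q.first = p.last) :
    G.IsWalk p.first (p.edges ++ q.edges) := by
  rw [G.isWalk_append]
  refine ⟨p.wf, ?_⟩
  show G.IsWalk p.last q.edges
  rw [← h]
  exact q.wf

/-- Concatenation of composable directed paths. -/
def concatPath (p q : G.DPath) (h : q.first = p.last) : G.DPath :=
  ⟨p.first, p.edges ++ q.edges, G.isWalk_concat h⟩

theorem isWalk_replicate (a : G.E) (h : G.tgt a = G.src a) (m : ℕ) :
    G.IsWalk (G.src a) (List.replicate m a) := by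
  induction m with
  | zero => trivial
  | succ n ih => rw [List.replicate_succ, G.isWalk_cons]; exact ⟨rfl, by rw [h]; exact ih⟩

/-- The path traversing a loop `a` exactly `m` times. -/
def loopPow (a : G.E) (h : G.tgt a = G.src a) (m : ℕ) : G.DPath :=
  ⟨G.src a, List.replicate m a, G.isWalk_replicate a h m⟩

/-- `p` is a nonempty directed circuit. -/
def IsCircuit (p : G.DPath) : Prop := p.edges ≠ [] ∧ p.last = p.first

/-- `p` and `d` share no nontrivial common prefix (initial segment). -/
def NoCommonPrefix (p d : G.DPath) : Prop :=
  ∀ l : List G.E, l ≠ [] → l <+: p.edges → ¬ l <+: d.edges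

end DGraph

/-- The underlying set of the graph inverse semigroup `S(Γ)`: pairs of directed
paths with the same initial vertex, together with a zero element. -/
inductive GIS (G : DGraph) where
  | zero : GIS G
  | pair (a b : G.DPath) (h : a.first = b.first) : GIS G

namespace GIS

open scoped Classical in
/-- The multiplication of the graph inverse semigroup:
`(t,u)(v,w) = (t,pw)` if `u = pv`, `(pt,w)` if `v = pu`, and `0` otherwise. -/
noncomputable def mul {G : DGraph} : GIS G → GIS G → GIS G
  | .zero, _ => .zero
  | .pair _ _ _, .zero => .zero
  | .pair t u h1, .pair v w h2 =>
    if hs : v.IsSuffixOf u then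
      .pair t ⟨t.first, u.edges.take (u.edges.length - v.edges.length) ++ w.edges,
        by rw [h1]; exact G.isWalk_chopAppend hs h2⟩ rfl
    else if hs' : u.IsSuffixOf v then
      .pair ⟨v.first, v.edges.take (v.edges.length - u.edges.length) ++ t.edges,
        G.isWalk_chopAppend hs' h1.symm⟩ w h2
    else .zero

noncomputable instance {G : DGraph} : Mul (GIS G) := ⟨GIS.mul⟩

/-- The inverse: `(v,w)⁻¹ = (w,v)` and `0⁻¹ = 0`. -/
def inv {G : DGraph} : GIS G → GIS G
  | .zero => .zero
  | .pair a b h => .pair b a h.symm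

/-- The natural partial order: `x ≤ y` iff `x = e * y` for some idempotent `e`. -/
def le {G : DGraph} (x y : GIS G) : Prop := ∃ e : GIS G, e * e = e ∧ x = e * y

end GIS

/-- `L` is a closed inverse subsemigroup of `S(Γ)`: a nonempty subset closed under
multiplication, inverses, and upward closed in the natural partial order. -/
def IsCISS (G : DGraph) (L : Set (GIS G)) : Prop :=
  L.Nonempty ∧ (∀ a ∈ L, ∀ b ∈ L, a * b ∈ L) ∧ (∀ a ∈ L, a.inv ∈ L) ∧
    (∀ a ∈ L, ∀ s : GIS G, GIS.le a s → s ∈ L)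

/-- The closed inverse subsemigroup `↑{(u,u)}` of (finite) chain type:
all `(q,q)` with `q` a suffix of `u`. -/
def chainSet (G : DGraph) (u : G.DPath) : Set (GIS G) :=
  {x | ∃ q : G.DPath, q.IsSuffixOf u ∧ x = GIS.pair q q rfl}

/-- The edge list of the `r`-th power of the path `p`. -/
def powEdges {G : DGraph} (p : G.DPath) (r : ℕ) : List G.E :=
  (List.replicate r p.edges).flatten

/-- The closed inverse subsemigroup of cycle type
`L_{p,d} = {(v p^r d, v p^s d) : r,s ≥ 0, v a suffix of p} ∪ {(q,q) : q a suffix of d}`. -/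
def cycleSet (G : DGraph) (p d : G.DPath) : Set (GIS G) :=
  {x | (∃ (r s : ℕ) (v a b : G.DPath) (h : a.first = b.first),
          v.IsSuffixOf p ∧ x = GIS.pair a b h ∧
          a.first = v.first ∧ a.edges = v.edges ++ powEdges p r ++ d.edges ∧
          b.first = v.first ∧ b.edges = v.edges ++ powEdges p s ++ d.edges) ∨
       (∃ q : G.DPath, q.IsSuffixOf d ∧ x = GIS.pair q q rfl)}

/-- `L` is a chain of idempotents: all elements are idempotent and any two are
comparable in the natural partial order. -/
def IsChainOfIdem (G : DGraph) (L : Set (GIS G)) : Prop :=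
  (∀ x ∈ L, x * x = x) ∧ ∀ x ∈ L, ∀ y ∈ L, GIS.le x y ∨ GIS.le y x

/-- The set of right cosets `↑(Lt)` (for `t` with `t t⁻¹ ∈ L`) of a closed inverse
subsemigroup `L`. -/
def cosets (G : DGraph) (L : Set (GIS G)) : Set (Set (GIS G)) :=
  {C | ∃ t : GIS G, t * t.inv ∈ L ∧ C = {s | ∃ x ∈ L, GIS.le (x * t) s}}

/-- `H` and `K` are conjugate: for some `s`, `s⁻¹Hs ⊆ K` and `sKs⁻¹ ⊆ H`. -/
def Conjugate (G : DGraph) (H K : Set (GIS G)) : Prop :=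
  ∃ s : GIS G, (∀ h ∈ H, s.inv * h * s ∈ K) ∧ (∀ k ∈ K, s * k * s.inv ∈ H)

/-- The set of directed paths with initial vertex `v` whose first edge (if any)
is not an edge of `w`. -/
def Npaths (G : DGraph) (v : G.V) (w : G.DPath) : Set G.DPath :=
  {t | t.first = v ∧ ∀ e, t.edges.head? = some e → e ∉ w.edges}

/-!
Every pair in `L_{p,d}` consists of paths ending at the terminal vertex of `d`, and such a
path is determined by its edge list, so membership reduces to a relation `CycleRel` on edge
lists. All these edge lists are suffixes of `p^N d` for `N` large, so any two of them are
comparable and a product of two elements of `L_{p,d}` is never `0`; closure under products is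
then exponent bookkeeping once the prefix `v` is normalised to a proper suffix of `p`.
Upward closure amounts to the cancellation `(l V, l W) ∈ L_{p,d} ⟹ (V, W) ∈ L_{p,d}`; the only
way it could fail is for `l` to run past `v p^r` into `d` on one side while the other side still
reads `p`, which is impossible because `p` and `d` start with different edges.
-/

namespace DGraph

variable {G : DGraph}

theorem walkEnd_append (x : G.V) (l₁ l₂ : List G.E) :
    G.walkEnd x (l₁ ++ l₂) = G.walkEnd (G.walkEnd x l₁) l₂ := by
  induction l₁ generalizing x with
  | nil => rfl
  | cons e l ih => exact ih (G.tgt e)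

theorem eq_of_isWalk_of_walkEnd_eq {x y : G.V} {l : List G.E} (hx : G.IsWalk x l)
    (hy : G.IsWalk y l) (h : G.walkEnd x l = G.walkEnd y l) : x = y := by
  cases l with
  | nil => exact h
  | cons e l => exact hx.1.symm.trans hy.1

theorem isWalk_flatten_replicate {x : G.V} {l : List G.E} (hl : G.IsWalk x l)
    (hc : G.walkEnd x l = x) (r : ℕ) :
    G.IsWalk x (List.replicate r l).flatten ∧ G.walkEnd x (List.replicate r l).flatten = x := by
  induction r with
  | zero => exact ⟨trivial, rfl⟩
  | succ r ih =>
    rw [List.replicate_succ, List.flatten_cons, isWalk_append, walkEnd_append, hc]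
    exact ⟨⟨hl, ih.1⟩, ih.2⟩

namespace DPath

theorem ext_of_last {x y : G.DPath} (he : x.edges = y.edges) (hl : x.last = y.last) : x = y := by
  obtain ⟨x₀, l, hx⟩ := x
  obtain ⟨y₀, l', hy⟩ := y
  subst he
  obtain rfl : x₀ = y₀ := eq_of_isWalk_of_walkEnd_eq hx hy hl
  rfl

theorem isSuffixOf_iff {v u : G.DPath} :
    v.IsSuffixOf u ↔ v.edges <:+ u.edges ∧ v.last = u.last := by
  constructor
  · rintro ⟨l, hl, hf⟩
    refine ⟨⟨l, hl.symm⟩, ?_⟩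
    rw [last, last, hl, walkEnd_append, hf]
  · rintro ⟨⟨l, hl⟩, hlast⟩
    have hu := u.wf
    rw [← hl, isWalk_append] at hu
    refine ⟨l, hl.symm, eq_of_isWalk_of_walkEnd_eq v.wf hu.2 ?_⟩
    rw [← walkEnd_append, hl]
    exact hlast

theorem exists_isSuffixOf_of_suffix {u : G.DPath} {l : List G.E} (h : l <:+ u.edges) :
    ∃ v : G.DPath, v.IsSuffixOf u ∧ v.edges = l := by
  obtain ⟨m, hm⟩ := h
  have hu := u.wf
  rw [← hm, isWalk_append] at hu
  exact ⟨⟨_, l, hu.2⟩, ⟨m, hm.symm, rfl⟩, rfl⟩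

end DPath

end DGraph

section ListPow

variable {α : Type*} {P D : List α}

theorem take_length_sub_length_eq {l m r : List α} (h : l = m ++ r) :
    l.take (l.length - r.length) = m := by
  subst h
  simp

def listPow (P : List α) (r : ℕ) : List α := (List.replicate r P).flatten

theorem listPow_succ (P : List α) (r : ℕ) : listPow P (r + 1) = P ++ listPow P r := by
  rw [listPow, List.replicate_succ, List.flatten_cons, listPow]

theorem listPow_add (P : List α) (a b : ℕ) : listPow P (a + b) = listPow P a ++ listPow P b := by
  rw [listPow, List.replicate_add, List.flatten_append, listPow, listPow]

theorem length_listPow (P : List α) (r : ℕ) : (listPow P r).length = r * P.length := by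
  simp [listPow]

theorem head?_listPow {r : ℕ} (h : listPow P r ≠ []) : (listPow P r).head? = P.head? := by
  rcases r with _ | r
  · exact absurd rfl h
  · exact List.head?_flatten_replicate r.succ_ne_zero P

theorem listPow_append_suffix_listPow_append {n N : ℕ} (h : n ≤ N) (D : List α) :
    listPow P n ++ D <:+ listPow P N ++ D := by
  obtain ⟨k, rfl⟩ := Nat.exists_eq_add_of_le' h
  rw [listPow_add, List.append_assoc]
  exact List.suffix_append _ _

theorem append_listPow_append_suffix {v : List α} (hv : v <:+ P) (n : ℕ) :
    v ++ listPow P n ++ D <:+ listPow P (n + 1) ++ D := by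
  rw [listPow_succ, List.append_assoc, List.append_assoc]
  exact List.suffix_append_self_iff.2 hv

theorem exists_eq_append_listPow_of_suffix {t : List α} {m : ℕ} (h : t <:+ listPow P m) :
    ∃ v j, v <:+ P ∧ t = v ++ listPow P j := by
  induction m with
  | zero => exact ⟨[], 0, List.nil_suffix, by simpa [listPow] using h⟩
  | succ m ih =>
    obtain ⟨u, hu⟩ := h
    rw [listPow_succ, List.append_eq_append_iff] at hu
    rcases hu with ⟨a, hP, rfl⟩ | ⟨c, -, hm⟩
    · exact ⟨a, m, ⟨u, hP.symm⟩, rfl⟩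
    · exact ih ⟨c, hm.symm⟩

theorem exists_short_suffix (hP : P ≠ []) {v : List α} (hv : v <:+ P) :
    ∃ v' k, v' <:+ P ∧ v'.length < P.length ∧
      ∀ r, v ++ listPow P r = v' ++ listPow P (k + r) := by
  rcases lt_or_ge v.length P.length with hlt | hge
  · exact ⟨v, 0, hv, hlt, by simp⟩
  · refine ⟨[], 1, List.nil_suffix, List.length_pos_iff.2 hP, fun r => ?_⟩
    rw [hv.eq_of_length_le hge, add_comm, listPow_succ, List.nil_append]

theorem exists_append_listPow_eq {m v v₀ : List α} {a s : ℕ} (hv₀ : v₀.length < P.length)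
    (h : m ++ (v ++ listPow P a ++ D) = v₀ ++ listPow P s ++ D) :
    ∃ n, m ++ v = v₀ ++ listPow P n ∧ s = n + a := by
  have hlen := congrArg List.length h
  simp only [List.length_append, length_listPow] at hlen
  have has : a < s + 1 :=
    Nat.lt_of_mul_lt_mul_right (a := P.length) (by rw [Nat.succ_mul]; omega)
  obtain ⟨n, rfl⟩ := Nat.exists_eq_add_of_le (Nat.lt_succ_iff.1 has)
  refine ⟨n, List.append_cancel_right (bs := listPow P a ++ D) ?_, add_comm _ _⟩
  rw [add_comm, listPow_add] at h
  simpa only [List.append_assoc] using h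

def CycleRel (P D : List α) (x y : List α) : Prop :=
  (∃ v r s, v <:+ P ∧ x = v ++ listPow P r ++ D ∧ y = v ++ listPow P s ++ D) ∨
    (x = y ∧ x <:+ D)

namespace CycleRel

variable {x y t u v w m : List α}

theorem symm (h : CycleRel P D x y) : CycleRel P D y x := by
  rcases h with ⟨v, r, s, hv, rfl, rfl⟩ | ⟨rfl, hx⟩
  · exact Or.inl ⟨v, s, r, hv, rfl, rfl⟩
  · exact Or.inr ⟨rfl, hx⟩

theorem exists_suffix (h : CycleRel P D x y) :
    ∃ N, x <:+ listPow P N ++ D ∧ y <:+ listPow P N ++ D := by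
  rcases h with ⟨v, r, s, hv, rfl, rfl⟩ | ⟨rfl, hx⟩
  · have key (n : ℕ) (hn : n ≤ max r s) :
        v ++ listPow P n ++ D <:+ listPow P (max r s + 1) ++ D :=
      (append_listPow_append_suffix hv n).trans (listPow_append_suffix_listPow_append (by omega) D)
    exact ⟨max r s + 1, key r (le_max_left r s), key s (le_max_right r s)⟩
  · exact ⟨0, List.suffix_append_of_suffix hx, List.suffix_append_of_suffix hx⟩

theorem suffix_or_suffix (htu : CycleRel P D t u) (hvw : CycleRel P D v w) :
    u <:+ v ∨ v <:+ u := by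
  obtain ⟨N₁, -, hu⟩ := htu.exists_suffix
  obtain ⟨N₂, hv, -⟩ := hvw.exists_suffix
  exact List.suffix_or_suffix_of_suffix
    (hu.trans (listPow_append_suffix_listPow_append (le_max_left N₁ N₂) D))
    (hv.trans (listPow_append_suffix_listPow_append (le_max_right N₁ N₂) D))

theorem append_right (hP : P ≠ []) (htu : CycleRel P D t u) (hvw : CycleRel P D v w)
    (hm : u = m ++ v) : CycleRel P D t (m ++ w) := by
  rcases hvw with ⟨v₂, a, b, hv₂, rfl, rfl⟩ | ⟨rfl, -⟩
  swap
  · rwa [← hm]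
  rcases htu with ⟨v₁, r, s, hv₁, rfl, rfl⟩ | ⟨rfl, ht⟩
  · obtain ⟨v₀, k, hv₀, hlen, hshift⟩ := exists_short_suffix hP hv₁
    rw [hshift] at hm ⊢
    obtain ⟨n, hmv, -⟩ := exists_append_listPow_eq hlen hm.symm
    refine Or.inl ⟨v₀, k + r, n + b, hv₀, rfl, ?_⟩
    rw [listPow_add, ← List.append_assoc, ← List.append_assoc, hmv, List.append_assoc v₀]
  · have hlen := congrArg List.length hm
    simp only [List.length_append] at hlen
    have hu := ht.length_le
    obtain rfl : m = [] := List.eq_nil_of_length_eq_zero (by omega)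
    rw [List.nil_append] at hm ⊢
    exact Or.inl ⟨v₂, a, b, hv₂, hm, rfl⟩

theorem append_left (hP : P ≠ []) (htu : CycleRel P D t u) (hvw : CycleRel P D v w)
    (hm : v = m ++ u) : CycleRel P D (m ++ t) w :=
  (append_right hP hvw.symm htu.symm hm).symm

theorem of_append_append_of_le {l V W v : List α} {r n : ℕ} (hPD : P.head? ≠ D.head?)
    (hv : v <:+ P) (hV : l ++ V = v ++ listPow P r ++ D)
    (hW : l ++ W = v ++ listPow P (r + n) ++ D) : CycleRel P D V W := by
  rw [listPow_add, ← List.append_assoc, List.append_assoc _ _ D] at hW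
  rcases List.append_eq_append_iff.1 hV with ⟨a, ha, rfl⟩ | ⟨c, rfl, hD⟩
  · rw [ha] at hW
    simp only [List.append_assoc] at hW
    obtain rfl := List.append_cancel_left hW
    have hsuf : a <:+ listPow P (r + 1) := by
      have hvr := append_listPow_append_suffix hv r (D := [])
      rw [List.append_nil, List.append_nil, ha] at hvr
      exact (List.suffix_append l a).trans hvr
    obtain ⟨v', j, hv', rfl⟩ := exists_eq_append_listPow_of_suffix hsuf
    exact Or.inl ⟨v', j, j + n, hv', rfl, by rw [listPow_add]; simp⟩
  · simp only [List.append_assoc] at hW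
    have hcW := List.append_cancel_left (List.append_cancel_left hW)
    subst hD
    by_cases hc : c = []
    · subst hc
      exact Or.inl ⟨[], 0, n, List.nil_suffix, by simp [listPow], by simpa using hcW⟩
    by_cases hn : listPow P n = []
    · rw [hn, List.nil_append] at hcW
      obtain rfl := List.append_cancel_left hcW
      exact Or.inr ⟨rfl, List.suffix_append c W⟩
    · -- the first edge of `c` would begin both `P` and `D`
      refine absurd ?_ hPD
      have hhead := congrArg List.head? hcW
      rw [List.head?_append_of_ne_nil _ hc, List.head?_append_of_ne_nil _ hn, head?_listPow hn]
        at hhead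
      rw [List.head?_append_of_ne_nil _ hc, hhead]

theorem of_append_append {l V W : List α} (hPD : P.head? ≠ D.head?)
    (h : CycleRel P D (l ++ V) (l ++ W)) : CycleRel P D V W := by
  rcases h with ⟨v, r, s, hv, hV, hW⟩ | ⟨h, hl⟩
  · rcases le_total r s with hrs | hsr
    · obtain ⟨n, rfl⟩ := Nat.exists_eq_add_of_le hrs
      exact of_append_append_of_le hPD hv hV hW
    · obtain ⟨n, rfl⟩ := Nat.exists_eq_add_of_le hsr
      exact (of_append_append_of_le hPD hv hW hV).symm
  · obtain rfl := List.append_cancel_left h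
    exact Or.inr ⟨rfl, (List.suffix_append l V).trans hl⟩

end CycleRel

end ListPow

namespace GIS

open DGraph DPath

variable {G : DGraph} {t u v w : G.DPath} {h₁ : t.first = u.first} {h₂ : v.first = w.first}
  {m : List G.E}

theorem mul_zero (x : GIS G) : x * zero = zero := by
  cases x <;> rfl

theorem pair_mul_pair_of_isSuffixOf (hs : v.IsSuffixOf u) (hm : u.edges = m ++ v.edges) :
    ∃ X h, pair t u h₁ * pair v w h₂ = pair t X h ∧
      X.edges = m ++ w.edges ∧ X.last = w.last := by
  refine ⟨⟨t.first, u.edges.take (u.edges.length - v.edges.length) ++ w.edges,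
    by rw [h₁]; exact G.isWalk_chopAppend hs h₂⟩, rfl, ?_, ?_, ?_⟩
  · show mul _ _ = _
    simp only [mul, dif_pos hs]
  · exact congrArg (· ++ w.edges) (take_length_sub_length_eq hm)
  · obtain ⟨l, hl, hf⟩ := hs
    obtain rfl : l = m := List.append_cancel_right (hl.symm.trans hm)
    simp only [last, take_length_sub_length_eq hm, walkEnd_append, h₁, ← hf, h₂]

theorem pair_mul_pair_of_not_isSuffixOf (hns : ¬ v.IsSuffixOf u) (hs : u.IsSuffixOf v)
    (hm : v.edges = m ++ u.edges) :
    ∃ X h, pair t u h₁ * pair v w h₂ = pair X w h ∧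
      X.edges = m ++ t.edges ∧ X.last = t.last := by
  refine ⟨⟨v.first, v.edges.take (v.edges.length - u.edges.length) ++ t.edges,
    G.isWalk_chopAppend hs h₁.symm⟩, h₂, ?_, ?_, ?_⟩
  · show mul _ _ = _
    simp only [mul, dif_neg hns, dif_pos hs]
  · exact congrArg (· ++ t.edges) (take_length_sub_length_eq hm)
  · obtain ⟨l, hl, hf⟩ := hs
    obtain rfl : l = m := List.append_cancel_right (hl.symm.trans hm)
    simp only [last, take_length_sub_length_eq hm, walkEnd_append, ← hf, h₁]

theorem pair_mul_pair_eq_zero (hns : ¬ v.IsSuffixOf u) (hns' : ¬ u.IsSuffixOf v) :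
    pair t u h₁ * pair v w h₂ = zero := by
  show mul _ _ = _
  simp only [mul, dif_neg hns, dif_neg hns']

theorem eq_of_pair_mul_self (he : pair t u h₁ * pair t u h₁ = pair t u h₁) : t = u := by
  by_cases hs : t.IsSuffixOf u
  · obtain ⟨m, hm, -⟩ := id hs
    obtain ⟨X, _, hprod, hX, -⟩ :=
      pair_mul_pair_of_isSuffixOf (t := t) (w := u) (h₁ := h₁) (h₂ := h₁) hs hm
    rw [hprod] at he
    injection he with _ hXu
    subst hXu
    obtain rfl : m = [] := List.append_left_eq_self.1 hX.symm
    rw [List.nil_append] at hm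
    exact ext_of_last hm.symm (isSuffixOf_iff.1 hs).2
  by_cases hs' : u.IsSuffixOf t
  · obtain ⟨m, hm, -⟩ := id hs'
    obtain ⟨X, _, hprod, hX, -⟩ :=
      pair_mul_pair_of_not_isSuffixOf (t := t) (w := u) (h₁ := h₁) (h₂ := h₁) hs hs' hm
    rw [hprod] at he
    injection he with hXt _
    subst hXt
    obtain rfl : m = [] := List.append_left_eq_self.1 hX.symm
    rw [List.nil_append] at hm
    exact ext_of_last hm (isSuffixOf_iff.1 hs').2.symm
  rw [pair_mul_pair_eq_zero hs hs'] at he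
  cases he

end GIS

section cycleSet

open DGraph DPath

variable {G : DGraph} {p d : G.DPath}

theorem head?_ne_head?_of_noCommonPrefix (hP : p.edges ≠ []) (hpre : G.NoCommonPrefix p d) :
    p.edges.head? ≠ d.edges.head? := by
  obtain ⟨e, P, hP⟩ := List.exists_cons_of_ne_nil hP
  rw [hP, List.head?_cons, ne_comm, Ne, List.head?_eq_some_iff]
  rintro ⟨D, hD⟩
  exact hpre [e] (List.cons_ne_nil _ _) ⟨P, hP.symm⟩ ⟨D, hD.symm⟩

theorem zero_notMem_cycleSet : GIS.zero ∉ cycleSet G p d := by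
  rintro (⟨_, _, _, _, _, _, _, h, -⟩ | ⟨_, _, h⟩) <;> cases h

theorem isWalk_cycleWord (hp : p.last = p.first) (hd : d.first = p.first) {v : G.DPath}
    (hv : v.IsSuffixOf p) (r : ℕ) :
    G.IsWalk v.first (v.edges ++ powEdges p r ++ d.edges) ∧
      G.walkEnd v.first (v.edges ++ powEdges p r ++ d.edges) = d.last := by
  have hvp : G.walkEnd v.first v.edges = p.first := (isSuffixOf_iff.1 hv).2.trans hp
  obtain ⟨hpow, hpowEnd⟩ := G.isWalk_flatten_replicate p.wf hp r
  simp only [isWalk_append, walkEnd_append, powEdges, hvp, hpowEnd]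
  exact ⟨⟨⟨v.wf, hpow⟩, hd ▸ d.wf⟩, hd ▸ rfl⟩

theorem pair_mem_cycleSet_iff (hp : p.last = p.first) (hd : d.first = p.first) {a b : G.DPath}
    {h : a.first = b.first} :
    GIS.pair a b h ∈ cycleSet G p d ↔
      a.last = d.last ∧ b.last = d.last ∧ CycleRel p.edges d.edges a.edges b.edges := by
  constructor
  · rintro (⟨r, s, v, a', b', h', hv, hx, ha, hae, hb, hbe⟩ | ⟨q, hq, hx⟩)
    · injection hx with ha' hb'
      subst ha' hb'
      refine ⟨?_, ?_, Or.inl ⟨v.edges, r, s, (isSuffixOf_iff.1 hv).1, hae, hbe⟩⟩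
      · rw [last, ha, hae]
        exact (isWalk_cycleWord hp hd hv r).2
      · rw [last, hb, hbe]
        exact (isWalk_cycleWord hp hd hv s).2
    · injection hx with ha' hb'
      subst ha' hb'
      obtain ⟨hsuf, hlast⟩ := isSuffixOf_iff.1 hq
      exact ⟨hlast, hlast, Or.inr ⟨rfl, hsuf⟩⟩
  · rintro ⟨ha, hb, ⟨l, r, s, hl, hae, hbe⟩ | ⟨he, hsuf⟩⟩
    · obtain ⟨v, hv, rfl⟩ := exists_isSuffixOf_of_suffix hl
      have first_eq {c : G.DPath} {n : ℕ} (hc : c.last = d.last)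
          (hce : c.edges = v.edges ++ powEdges p n ++ d.edges) : c.first = v.first := by
        obtain ⟨hw, hend⟩ := isWalk_cycleWord hp hd hv n
        have hcw := c.wf
        rw [hce] at hcw
        refine eq_of_isWalk_of_walkEnd_eq hcw hw ?_
        rw [hend, ← hc, last, hce]
      exact Or.inl ⟨r, s, v, a, b, h, hv, rfl, first_eq ha hae, hae, first_eq hb hbe, hbe⟩
    · obtain rfl := ext_of_last he (ha.trans hb.symm)
      exact Or.inr ⟨a, isSuffixOf_iff.2 ⟨hsuf, ha⟩, rfl⟩

theorem inv_mem_cycleSet {x : GIS G} (hx : x ∈ cycleSet G p d) : x.inv ∈ cycleSet G p d := by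
  rcases hx with ⟨r, s, v, a, b, h, hv, rfl, ha, hae, hb, hbe⟩ | ⟨q, hq, rfl⟩
  · exact Or.inl ⟨s, r, v, b, a, h.symm, hv, rfl, hb, hbe, ha, hae⟩
  · exact Or.inr ⟨q, hq, rfl⟩

theorem mul_mem_cycleSet (hp : G.IsCircuit p) (hd : d.first = p.first) {x y : GIS G}
    (hx : x ∈ cycleSet G p d) (hy : y ∈ cycleSet G p d) : x * y ∈ cycleSet G p d := by
  obtain ⟨hP, hp⟩ := hp
  rcases x with _ | ⟨t, u, h₁⟩
  · exact absurd hx zero_notMem_cycleSet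
  rcases y with _ | ⟨v, w, h₂⟩
  · exact absurd hy zero_notMem_cycleSet
  obtain ⟨ht, hu, htu⟩ := (pair_mem_cycleSet_iff hp hd).1 hx
  obtain ⟨hv, hw, hvw⟩ := (pair_mem_cycleSet_iff hp hd).1 hy
  by_cases hs : v.IsSuffixOf u
  · obtain ⟨m, hm, -⟩ := id hs
    obtain ⟨X, _, hprod, hXe, hXl⟩ :=
      GIS.pair_mul_pair_of_isSuffixOf (t := t) (w := w) (h₁ := h₁) (h₂ := h₂) hs hm
    rw [hprod, pair_mem_cycleSet_iff hp hd, hXe, hXl]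
    exact ⟨ht, hw, htu.append_right hP hvw hm⟩
  · have hs' : u.IsSuffixOf v := by
      refine isSuffixOf_iff.2 ⟨?_, hu.trans hv.symm⟩
      refine (htu.suffix_or_suffix hvw).resolve_right fun hvu => hs ?_
      exact isSuffixOf_iff.2 ⟨hvu, hv.trans hu.symm⟩
    obtain ⟨m, hm, -⟩ := id hs'
    obtain ⟨X, _, hprod, hXe, hXl⟩ :=
      GIS.pair_mul_pair_of_not_isSuffixOf (t := t) (w := w) (h₁ := h₁) (h₂ := h₂) hs hs' hm
    rw [hprod, pair_mem_cycleSet_iff hp hd, hXe, hXl]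
    exact ⟨ht, hw, htu.append_left hP hvw hm⟩

theorem mem_cycleSet_of_le (hp : G.IsCircuit p) (hd : d.first = p.first)
    (hpre : G.NoCommonPrefix p d) {x z : GIS G} (hx : x ∈ cycleSet G p d) (hxz : GIS.le x z) :
    z ∈ cycleSet G p d := by
  obtain ⟨e, he, rfl⟩ := hxz
  rcases e with _ | ⟨t, u, h₁⟩
  · exact absurd hx zero_notMem_cycleSet
  obtain rfl := GIS.eq_of_pair_mul_self he
  rcases z with _ | ⟨V, W, h₂⟩
  · rw [GIS.mul_zero] at hx
    exact absurd hx zero_notMem_cycleSet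
  by_cases hs : V.IsSuffixOf t
  · obtain ⟨m, hm, -⟩ := id hs
    obtain ⟨X, _, hprod, hXe, hXl⟩ :=
      GIS.pair_mul_pair_of_isSuffixOf (t := t) (w := W) (h₁ := h₁) (h₂ := h₂) hs hm
    rw [hprod, pair_mem_cycleSet_iff hp.2 hd, hXe, hXl, hm] at hx
    obtain ⟨ht, hW, htW⟩ := hx
    rw [pair_mem_cycleSet_iff hp.2 hd]
    exact ⟨(isSuffixOf_iff.1 hs).2.trans ht, hW,
      htW.of_append_append (head?_ne_head?_of_noCommonPrefix hp.1 hpre)⟩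
  by_cases hs' : t.IsSuffixOf V
  · obtain ⟨m, hm, -⟩ := id hs'
    obtain ⟨X, _, hprod, hXe, hXl⟩ :=
      GIS.pair_mul_pair_of_not_isSuffixOf (t := t) (w := W) (h₁ := h₁) (h₂ := h₂) hs hs' hm
    obtain rfl : X = V := ext_of_last (hXe.trans hm.symm) (hXl.trans (isSuffixOf_iff.1 hs').2)
    rwa [hprod] at hx
  rw [GIS.pair_mul_pair_eq_zero hs hs'] at hx
  exact absurd hx zero_notMem_cycleSet

end cycleSet

theorem stmt_4_general (G : DGraph) (p d : G.DPath)
    (hp : G.IsCircuit p) (hd : d.first = p.first) (hpre : G.NoCommonPrefix p d) :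
    IsCISS G (cycleSet G p d) :=
  ⟨⟨GIS.pair d d rfl, Or.inr ⟨d, ⟨[], rfl, rfl⟩, rfl⟩⟩,
    fun _ hx _ hy => mul_mem_cycleSet hp hd hx hy,
    fun _ hx => inv_mem_cycleSet hx,
    fun _ hx _ hxz => mem_cycleSet_of_le hp hd hpre hx hxz⟩

/-- `L_{p,d}` is a closed inverse subsemigroup of `S(Γ)`. -/
theorem stmt_4 (G : DGraph) [Fintype G.V] [Fintype G.E] (p d : G.DPath)
    (hp : G.IsCircuit p) (hd : d.first = p.first) (hpre : G.NoCommonPrefix p d) :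
    IsCISS G (cycleSet G p d) :=
  stmt_4_general G p d hp hd hpre
end

section
/- Let Γ be a finite directed graph and let L be a proper closed inverse subsemigroup of S(Γ). Then 0 ∉ L, any two directed paths occurring as a component of an element of L are suffix comparable, and for every (u,v) ∈ L the paths u and v have the same initial vertex and the same terminal vertex. -/
theorem GIS.zero_mul' {G : DGraph} (x : GIS G) : (GIS.zero : GIS G) * x = GIS.zero := rfl

theorem GIS.zero_le' {G : DGraph} (x : GIS G) : GIS.le GIS.zero x :=
  ⟨GIS.zero, rfl, rfl⟩

theorem GIS.mul_ne_zero_comparable {G : DGraph} {t u v w : G.DPath}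
    {h1 : t.first = u.first} {h2 : v.first = w.first}
    (h : GIS.pair t u h1 * GIS.pair v w h2 ≠ GIS.zero) :
    v.IsSuffixOf u ∨ u.IsSuffixOf v := by
  by_contra hc
  push_neg at hc
  apply h
  show GIS.mul _ _ = _
  unfold GIS.mul
  dsimp only
  rw [dif_neg hc.1, dif_neg hc.2]

theorem DGraph.walkEnd_append_s7 (G : DGraph) (v : G.V) (l1 l2 : List G.E) :
    G.walkEnd v (l1 ++ l2) = G.walkEnd (G.walkEnd v l1) l2 := by
  induction l1 generalizing v with
  | nil => rfl
  | cons e l ih => simp [ih]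

theorem last_eq_of_suffix {G : DGraph} {a b : G.DPath} (hs : a.IsSuffixOf b)
    (hf : a.first = b.first) : a.last = b.last := by
  obtain ⟨l, hl, hfst⟩ := hs
  unfold DGraph.DPath.last
  rw [hl, G.walkEnd_append_s7, ← hfst, hf]

/-- if `L` is a proper closed inverse subsemigroup of `S(Γ)` then
`0 ∉ L`, any two paths occurring as components of elements of `L` are suffix
comparable, and both components of any element of `L` have the same initial
vertex and the same terminal vertex. -/
theorem stmt_7 (G : DGraph) [Fintype G.V] [Fintype G.E] (L : Set (GIS G))
    (hL : IsCISS G L) (hproper : L ≠ Set.univ) :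
    GIS.zero ∉ L ∧
    (∀ (a b : G.DPath) (h : a.first = b.first), GIS.pair a b h ∈ L →
      ∀ (c e : G.DPath) (h' : c.first = e.first), GIS.pair c e h' ∈ L →
        (a.IsSuffixOf c ∨ c.IsSuffixOf a) ∧ (a.IsSuffixOf e ∨ e.IsSuffixOf a) ∧
        (b.IsSuffixOf c ∨ c.IsSuffixOf b) ∧ (b.IsSuffixOf e ∨ e.IsSuffixOf b)) ∧
    (∀ (a b : G.DPath) (h : a.first = b.first), GIS.pair a b h ∈ L →
      a.first = b.first ∧ a.last = b.last) := by
  obtain ⟨hne, hmul, hinv, hclosed⟩ := hL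
  have hz : GIS.zero ∉ L := by
    intro hz
    apply hproper
    ext s
    simp only [Set.mem_univ, iff_true]
    exact hclosed _ hz s (GIS.zero_le' s)
  have key : ∀ (a b : G.DPath) (h : a.first = b.first), GIS.pair a b h ∈ L →
      ∀ (c e : G.DPath) (h' : c.first = e.first), GIS.pair c e h' ∈ L →
        c.IsSuffixOf b ∨ b.IsSuffixOf c := by
    intro a b h hab c e h' hce
    have hp : GIS.pair a b h * GIS.pair c e h' ∈ L := hmul _ hab _ hce
    have hnz : GIS.pair a b h * GIS.pair c e h' ≠ GIS.zero := by
      intro heq; rw [heq] at hp; exact hz hp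
    exact GIS.mul_ne_zero_comparable hnz
  refine ⟨hz, ?_, ?_⟩
  · intro a b h hab c e h' hce
    have hba : GIS.pair b a h.symm ∈ L := hinv _ hab
    have hec : GIS.pair e c h'.symm ∈ L := hinv _ hce
    exact ⟨(key b a h.symm hba c e h' hce).symm,
      (key b a h.symm hba e c h'.symm hec).symm,
      (key a b h hab c e h' hce).symm,
      (key a b h hab e c h'.symm hec).symm⟩
  · intro a b h hab
    refine ⟨h, ?_⟩
    rcases key a b h hab a b h hab with hs | hs
    · exact last_eq_of_suffix hs h
    · exact (last_eq_of_suffix hs h.symm).symm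
end

section
/- Let Γ be a finite directed graph containing no directed circuit. Then every proper closed inverse subsemigroup of the graph inverse semigroup S(Γ) is a chain of idempotents. -/
section Aux

variable {G : DGraph}

theorem DPath.ext' {p q : G.DPath} (h1 : p.first = q.first) (h2 : p.edges = q.edges) :
    p = q := by
  cases p; cases q; cases h1; cases h2; rfl

theorem GIS.pair_congr {a b a' b' : G.DPath} (ha : a = a') (hb : b = b')
    (h : a.first = b.first) (h' : a'.first = b'.first) :
    GIS.pair a b h = GIS.pair a' b' h' := by subst ha; subst hb; rfl

theorem DPath.suffix_refl (p : G.DPath) : p.IsSuffixOf p := ⟨[], rfl, rfl⟩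

open scoped Classical in
theorem GIS.mul_pair (t u v w : G.DPath) (h1 : t.first = u.first) (h2 : v.first = w.first) :
    (GIS.pair t u h1 : GIS G) * (GIS.pair v w h2) =
      if hs : v.IsSuffixOf u then
        GIS.pair t ⟨t.first, u.edges.take (u.edges.length - v.edges.length) ++ w.edges,
          by rw [h1]; exact G.isWalk_chopAppend hs h2⟩ rfl
      else if hs' : u.IsSuffixOf v then
        GIS.pair ⟨v.first, v.edges.take (v.edges.length - u.edges.length) ++ t.edges,
          G.isWalk_chopAppend hs' h1.symm⟩ w h2
      else GIS.zero := rfl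

theorem eq_of_suffix (hnocirc : ¬ ∃ c : G.DPath, G.IsCircuit c)
    {a b : G.DPath} (h : a.first = b.first) (hs : a.IsSuffixOf b) : a = b := by
  obtain ⟨l, hl, hf⟩ := hs
  rcases eq_or_ne l [] with rfl | hne
  · exact DPath.ext' h (by simpa using hl.symm)
  · exfalso
    apply hnocirc
    have hw : G.IsWalk b.first l := by
      have hb := b.wf
      rw [hl, G.isWalk_append] at hb
      exact hb.1
    refine ⟨⟨b.first, l, hw⟩, hne, ?_⟩
    show G.walkEnd b.first l = b.first
    rw [← hf, h]

theorem mul_idem_of_suffix {a b : G.DPath} (hs : b.IsSuffixOf a) :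
    (GIS.pair a a rfl : GIS G) * (GIS.pair b b rfl) = GIS.pair a a rfl := by
  rw [GIS.mul_pair, dif_pos hs]
  obtain ⟨l, hl, hf⟩ := hs
  have hedges : a.edges.take (a.edges.length - b.edges.length) ++ b.edges = a.edges := by
    rw [hl]
    have : (l ++ b.edges).length - b.edges.length = l.length := by simp
    rw [this, List.take_left]
  have hpath : (⟨a.first, a.edges.take (a.edges.length - b.edges.length) ++ b.edges,
      by rw [hedges]; exact a.wf⟩ : G.DPath) = a := DPath.ext' rfl hedges
  exact GIS.pair_congr rfl hpath _ _

end Aux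

/-- if `Γ` has no directed circuit, every proper closed inverse
subsemigroup of `S(Γ)` is a chain of idempotents. -/
theorem stmt_8 (G : DGraph) [Fintype G.V] [Fintype G.E]
    (hnocirc : ¬ ∃ c : G.DPath, G.IsCircuit c)
    (L : Set (GIS G)) (hL : IsCISS G L) (hproper : L ≠ Set.univ) :
    IsChainOfIdem G L := by
  obtain ⟨hne, hmul, hinv, hclosed⟩ := hL
  have h0 : (GIS.zero : GIS G) ∉ L := by
    intro h0
    apply hproper
    ext s
    simp only [Set.mem_univ, iff_true]
    exact hclosed _ h0 s ⟨GIS.zero, rfl, rfl⟩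
  have key : ∀ x ∈ L, ∃ q : G.DPath, x = GIS.pair q q rfl := by
    intro x hx
    cases x with
    | zero => exact absurd hx h0
    | pair a b h =>
      by_cases hs : a.IsSuffixOf b
      · have hab : a = b := eq_of_suffix hnocirc h hs
        subst hab
        exact ⟨a, rfl⟩
      · by_cases hs' : b.IsSuffixOf a
        · have hba : b = a := eq_of_suffix hnocirc h.symm hs'
          subst hba
          exact ⟨b, rfl⟩
        · exfalso
          apply h0
          have hxx := hmul _ hx _ hx
          rwa [GIS.mul_pair, dif_neg hs, dif_neg hs'] at hxx
  have idem : ∀ x ∈ L, x * x = x := by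
    intro x hx
    obtain ⟨q, rfl⟩ := key x hx
    exact mul_idem_of_suffix (DPath.suffix_refl q)
  refine ⟨idem, ?_⟩
  intro x hx y hy
  obtain ⟨a, rfl⟩ := key x hx
  obtain ⟨b, rfl⟩ := key y hy
  by_cases hs : b.IsSuffixOf a
  · exact Or.inl ⟨GIS.pair a a rfl, idem _ hx, (mul_idem_of_suffix hs).symm⟩
  · by_cases hs' : a.IsSuffixOf b
    · exact Or.inr ⟨GIS.pair b b rfl, idem _ hy, (mul_idem_of_suffix hs').symm⟩
    · exfalso
      apply h0
      have hxy := hmul _ hx _ hy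
      rwa [GIS.mul_pair, dif_neg hs, dif_neg hs'] at hxy
end

section
/- Let S be an E*-unitary inverse semigroup with zero, and let H and K be conjugate closed inverse subsemigroups of S with H ≠ S and K ≠ S. If H is contained in the set E(S) of idempotents of S, then K is also contained in E(S). -/
section Aux
variable {S : Type} [Semigroup S] (inv : S → S)

lemma aux_inv_idem
    (huniq : ∀ x y : S, (x * y * x = x ∧ y * x * y = y) → y = inv x)
    {e : S} (he : e * e = e) : inv e = e :=
  (huniq e e ⟨by rw [he, he], by rw [he, he]⟩).symm

lemma aux_idem_mul
    (hinv : ∀ x : S, x * inv x * x = x ∧ inv x * x * inv x = inv x)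
    (huniq : ∀ x y : S, (x * y * x = x ∧ y * x * y = y) → y = inv x)
    {e f : S} (he : e * e = e) (hf : f * f = f) :
    (e * f) * (e * f) = e * f := by
  set x := inv (e * f) with hx
  have ha1 : (e * f) * x * (e * f) = e * f := (hinv _).1
  have ha2 : x * (e * f) * x = x := (hinv _).2
  have heX : ∀ X : S, e * (e * X) = e * X := fun X => by rw [← mul_assoc, he]
  have hfX : ∀ X : S, f * (f * X) = f * X := fun X => by rw [← mul_assoc, hf]
  have ha2e : x * (e * (f * (x * e))) = x * e := by
    have := congrArg (· * e) ha2
    simpa [mul_assoc] using this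
  have hy : f * x * e = x := by
    refine (huniq (e * f) (f * x * e) ⟨?_, ?_⟩).trans hx.symm
    · have := ha1
      simp only [mul_assoc] at this ⊢
      simpa [heX, hfX] using this
    · simp only [mul_assoc]
      simp [heX, hfX, ha2e]
  have hxx : x * x = x := by
    conv_lhs => rw [← hy]
    simp only [mul_assoc]
    rw [ha2e]
    simpa [mul_assoc] using hy
  have hef : e * f = inv x := huniq x (e * f) ⟨ha2, ha1⟩
  rw [hef, aux_inv_idem inv huniq hxx, hxx]

lemma aux_idem_comm
    (hinv : ∀ x : S, x * inv x * x = x ∧ inv x * x * inv x = inv x)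
    (huniq : ∀ x y : S, (x * y * x = x ∧ y * x * y = y) → y = inv x)
    {e f : S} (he : e * e = e) (hf : f * f = f) :
    e * f = f * e := by
  have hef : (e * f) * (e * f) = e * f := aux_idem_mul inv hinv huniq he hf
  have hfe : (f * e) * (f * e) = f * e := aux_idem_mul inv hinv huniq hf he
  have heX : ∀ X : S, e * (e * X) = e * X := fun X => by rw [← mul_assoc, he]
  have hfX : ∀ X : S, f * (f * X) = f * X := fun X => by rw [← mul_assoc, hf]
  have h1 : f * e = inv (e * f) := by
    refine huniq (e * f) (f * e) ⟨?_, ?_⟩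
    · have := hef
      simp only [mul_assoc] at this ⊢
      simpa [heX, hfX] using this
    · have := hfe
      simp only [mul_assoc] at this ⊢
      simpa [heX, hfX] using this
  rw [h1, aux_inv_idem inv huniq hef]

end Aux

/-- in an `E*`-unitary inverse semigroup with zero, if `H` and `K` are
conjugate proper closed inverse subsemigroups and `H` consists of idempotents, then
so does `K`. -/
theorem stmt_9 {S : Type} [Semigroup S] [Zero S] (inv : S → S)
    (hinv : ∀ x : S, x * inv x * x = x ∧ inv x * x * inv x = inv x)
    (huniq : ∀ x y : S, (x * y * x = x ∧ y * x * y = y) → y = inv x)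
    (hEstar : ∀ e s : S, e * e = e → e ≠ 0 → NatLe e s → s * s = s)
    (H K : Set S)
    (hHne : H.Nonempty) (hHmul : ∀ a ∈ H, ∀ b ∈ H, a * b ∈ H)
    (hHinv : ∀ a ∈ H, inv a ∈ H) (hHcl : ∀ a ∈ H, ∀ s : S, NatLe a s → s ∈ H)
    (hKne : K.Nonempty) (hKmul : ∀ a ∈ K, ∀ b ∈ K, a * b ∈ K)
    (hKinv : ∀ a ∈ K, inv a ∈ K) (hKcl : ∀ a ∈ K, ∀ s : S, NatLe a s → s ∈ K)
    (hH : H ≠ Set.univ) (hK : K ≠ Set.univ)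
    (s : S) (hs1 : ∀ h ∈ H, inv s * h * s ∈ K) (hs2 : ∀ k ∈ K, s * k * inv s ∈ H)
    (hHE : ∀ h ∈ H, h * h = h) :
    ∀ k ∈ K, k * k = k := by
  have imul : ∀ {e f : S}, e * e = e → f * f = f → (e * f) * (e * f) = e * f :=
    fun he hf => aux_idem_mul inv hinv huniq he hf
  have icomm : ∀ {e f : S}, e * e = e → f * f = f → e * f = f * e :=
    fun he hf => aux_idem_comm inv hinv huniq he hf
  intro k hk
  have hs1' : s * inv s * s = s := (hinv s).1
  have hs2' : inv s * s * inv s = inv s := (hinv s).2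
  have hk1 : k * inv k * k = k := (hinv k).1
  have hff : (inv s * s) * (inv s * s) = inv s * s := by
    calc (inv s * s) * (inv s * s) = inv s * (s * inv s * s) := by
          simp [mul_assoc]
      _ = inv s * s := by rw [hs1']
  have hgg : (s * inv s) * (s * inv s) = s * inv s := by
    calc (s * inv s) * (s * inv s) = s * (inv s * s * inv s) := by
          simp [mul_assoc]
      _ = s * inv s := by rw [hs2']
  have hkk : (inv k * k) * (inv k * k) = inv k * k := by
    calc (inv k * k) * (inv k * k) = inv k * (k * inv k * k) := by
          simp [mul_assoc]
      _ = inv k * k := by rw [hk1]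
  -- h := s*k*inv s ∈ H, idempotent
  have hh : s * k * inv s ∈ H := hs2 k hk
  have hhe : (s * k * inv s) * (s * k * inv s) = s * k * inv s := hHE _ hh
  -- m := inv s * h * s ∈ K
  have hmK : inv s * (s * k * inv s) * s ∈ K := hs1 _ hh
  set m := inv s * (s * k * inv s) * s with hmdef
  -- m is idempotent
  have hmm : m * m = m := by
    have hcom : (s * k * inv s) * (s * inv s) = (s * inv s) * (s * k * inv s) :=
      icomm hhe hgg
    calc m * m
        = inv s * (((s * k * inv s) * (s * inv s)) * (s * k * inv s)) * s := by
          rw [hmdef]; simp [mul_assoc]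
      _ = inv s * (((s * inv s) * (s * k * inv s)) * (s * k * inv s)) * s := by
          rw [hcom]
      _ = inv s * ((s * inv s) * ((s * k * inv s) * (s * k * inv s))) * s := by
          simp [mul_assoc]
      _ = inv s * ((s * inv s) * (s * k * inv s)) * s := by rw [hhe]
      _ = (inv s * s * inv s) * (s * k * inv s) * s := by simp [mul_assoc]
      _ = m := by rw [hs2', ← hmdef]
  -- e := f * (k * f * inv k) is idempotent with e * k = m
  have hkfk : (k * (inv s * s) * inv k) * (k * (inv s * s) * inv k)
      = k * (inv s * s) * inv k := by
    have hcom : (inv s * s) * (inv k * k) = (inv k * k) * (inv s * s) :=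
      icomm hff hkk
    calc (k * (inv s * s) * inv k) * (k * (inv s * s) * inv k)
        = k * ((inv s * s) * (inv k * k) * (inv s * s)) * inv k := by
          simp [mul_assoc]
      _ = k * ((inv k * k) * (inv s * s) * (inv s * s)) * inv k := by
          rw [hcom]
      _ = k * ((inv k * k) * ((inv s * s) * (inv s * s))) * inv k := by
          simp [mul_assoc]
      _ = k * ((inv k * k) * (inv s * s)) * inv k := by rw [hff]
      _ = (k * inv k * k) * (inv s * s) * inv k := by simp [mul_assoc]
      _ = k * (inv s * s) * inv k := by rw [hk1]
  have hee : ((inv s * s) * (k * (inv s * s) * inv k)) * ((inv s * s) * (k * (inv s * s) * inv k))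
      = (inv s * s) * (k * (inv s * s) * inv k) := imul hff hkfk
  have hek : m = ((inv s * s) * (k * (inv s * s) * inv k)) * k := by
    have hcom : (inv s * s) * (inv k * k) = (inv k * k) * (inv s * s) :=
      icomm hff hkk
    have hek' : ((inv s * s) * (k * (inv s * s) * inv k)) * k = m := by
      calc ((inv s * s) * (k * (inv s * s) * inv k)) * k
          = (inv s * s) * (k * ((inv s * s) * (inv k * k))) := by simp [mul_assoc]
        _ = (inv s * s) * (k * ((inv k * k) * (inv s * s))) := by rw [hcom]
        _ = (inv s * s) * ((k * inv k * k) * (inv s * s)) := by simp [mul_assoc]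
        _ = (inv s * s) * (k * (inv s * s)) := by rw [hk1]
        _ = m := by rw [hmdef]; simp [mul_assoc]
    exact hek'.symm
  have hle : NatLe m k := ⟨_, hee, hek⟩
  clear hmdef
  clear_value m
  by_cases h0 : m = 0
  · -- the degenerate case: m = 0
    by_cases hu : ∃ u : S, u * u = u ∧ u ≠ 0 ∧ NatLe u m
    · obtain ⟨u, huu, hu0, e1, he1, hue1⟩ := hu
      refine hEstar u k huu hu0 ⟨e1 * ((inv s * s) * (k * (inv s * s) * inv k)),
        imul he1 hee, ?_⟩
      rw [hue1, hek]; simp [mul_assoc]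
    · push_neg at hu
      -- every idempotent absorbs into m
      have Pz : ∀ u : S, u * u = u → u * m = m := by
        intro u huu
        have h1 : (u * m) * (u * m) = u * m := imul huu hmm
        by_cases hz : u * m = 0
        · rw [hz, h0]
        · exact absurd ⟨u, huu, rfl⟩ (hu (u * m) h1 hz)
      have Pz' : ∀ u : S, u * u = u → m * u = m := fun u huu => by
        rw [icomm hmm huu]; exact Pz u huu
      -- m is central
      have central : ∀ t : S, t * m = m * t := by
        intro t
        have ht1 : t * inv t * t = t := (hinv t).1
        have htt : (inv t * t) * (inv t * t) = inv t * t := by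
          calc (inv t * t) * (inv t * t) = inv t * (t * inv t * t) := by
                simp [mul_assoc]
            _ = inv t * t := by rw [ht1]
        have htt' : (t * inv t) * (t * inv t) = t * inv t := by
          calc (t * inv t) * (t * inv t) = t * (inv t * t * inv t) := by
                simp [mul_assoc]
            _ = t * inv t := by rw [(hinv t).2]
        have hu1 : (t * m * inv t) * (t * m * inv t) = t * m * inv t := by
          calc (t * m * inv t) * (t * m * inv t)
              = t * ((m * (inv t * t)) * m) * inv t := by simp [mul_assoc]
            _ = t * (m * m) * inv t := by rw [Pz' _ htt]
            _ = t * m * inv t := by rw [hmm]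
        have hu2 : (inv t * m * t) * (inv t * m * t) = inv t * m * t := by
          calc (inv t * m * t) * (inv t * m * t)
              = inv t * ((m * (t * inv t)) * m) * t := by simp [mul_assoc]
            _ = inv t * (m * m) * t := by rw [Pz' _ htt']
            _ = inv t * m * t := by rw [hmm]
        -- (ii): (inv t * m * t) * m = m
        have hii : (inv t * m * t) * m = m := Pz _ hu2
        -- (iii): m * (t * m) = t * m
        have hiii : m * (t * m) = t * m := by
          have h3 := congrArg (fun x => t * x) hii
          simp only [mul_assoc] at h3
          calc m * (t * m) = ((t * inv t) * m) * (t * m) := by rw [Pz _ htt']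
            _ = t * (inv t * (m * (t * m))) := by simp [mul_assoc]
            _ = t * m := h3
        -- (i): m * (t * m * inv t) = m
        have hi : m * (t * m * inv t) = m := Pz' _ hu1
        have h4 := congrArg (fun x => x * t) hi
        simp only [mul_assoc] at h4
        -- h4 : m * (t * (m * (inv t * t))) = m * t
        calc t * m = t * (m * (inv t * t)) := by rw [Pz' _ htt]
          _ = m * (t * (m * (inv t * t))) := by
              have h5 : (m * (t * m)) * (inv t * t) = (t * m) * (inv t * t) := by
                rw [hiii]
              simp only [mul_assoc] at h5
              exact h5.symm
          _ = m * t := h4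
      have hsm : s * m * inv s = m := by
        calc s * m * inv s = m * s * inv s := by rw [central s]
          _ = m * (s * inv s) := by rw [mul_assoc]
          _ = m := Pz' _ hgg
      have hzH : m ∈ H := by
        have h6 := hs2 m hmK
        rwa [hsm] at h6
      have hkH : k ∈ H := hHcl m hzH k ⟨_, hee, hek⟩
      exact hHE k hkH
  · exact hEstar m k hmm h0 hle
end

section
/- Let S be an E*-unitary inverse semigroup with zero, and let H and K be conjugate closed inverse subsemigroups of S with H ≠ S ≠ K and H ⊆ E(S). If H has a minimum idempotent m (i.e. m ≤ e for all e ∈ H), then K also has a minimum idempotent; indeed, if s ∈ S satisfies s⁻¹Hs ⊆ K and sKs⁻¹ ⊆ H, then s⁻¹ms is a minimum element of K. -/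
/-- in the situation of STATEMENT 9, if `H` has a minimum idempotent
`m`, then `K` has a minimum idempotent, namely `s⁻¹ m s`. -/
theorem stmt_10 {S : Type} [Semigroup S] [Zero S] (inv : S → S)
    (hinv : ∀ x : S, x * inv x * x = x ∧ inv x * x * inv x = inv x)
    (huniq : ∀ x y : S, (x * y * x = x ∧ y * x * y = y) → y = inv x)
    (hEstar : ∀ e s : S, e * e = e → e ≠ 0 → NatLe e s → s * s = s)
    (H K : Set S)
    (hHne : H.Nonempty) (hHmul : ∀ a ∈ H, ∀ b ∈ H, a * b ∈ H)
    (hHinv : ∀ a ∈ H, inv a ∈ H) (hHcl : ∀ a ∈ H, ∀ s : S, NatLe a s → s ∈ H)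
    (hKne : K.Nonempty) (hKmul : ∀ a ∈ K, ∀ b ∈ K, a * b ∈ K)
    (hKinv : ∀ a ∈ K, inv a ∈ K) (hKcl : ∀ a ∈ K, ∀ s : S, NatLe a s → s ∈ K)
    (hH : H ≠ Set.univ) (hK : K ≠ Set.univ)
    (s : S) (hs1 : ∀ h ∈ H, inv s * h * s ∈ K) (hs2 : ∀ k ∈ K, s * k * inv s ∈ H)
    (hHE : ∀ h ∈ H, h * h = h)
    (m : S) (hm : m ∈ H) (hmin : ∀ e ∈ H, NatLe m e) :
    inv s * m * s ∈ K ∧ ∀ k ∈ K, NatLe (inv s * m * s) k := by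
  -- basic inverse-semigroup facts
  have inv_inv : ∀ a, inv (inv a) = a := fun a =>
    ((huniq (inv a) a ⟨(hinv a).2, (hinv a).1⟩)).symm
  have inv_idem : ∀ e, e * e = e → inv e = e := by
    intro e he
    exact (huniq e e ⟨by rw [he, he], by rw [he, he]⟩).symm
  have idem_mul : ∀ e f : S, e * e = e → f * f = f → (e * f) * (e * f) = e * f := by
    intro e f he hf
    have h1 : (e * f) * inv (e * f) * (e * f) = e * f := (hinv (e * f)).1
    have h2 : inv (e * f) * (e * f) * inv (e * f) = inv (e * f) := (hinv (e * f)).2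
    have hfxe : f * inv (e * f) * e = inv (e * f) := by
      refine (huniq (e * f) (f * inv (e * f) * e) ⟨?_, ?_⟩)
      · calc e * f * (f * inv (e * f) * e) * (e * f)
            = (e * (f * f)) * inv (e * f) * ((e * e) * f) := by
              simp only [mul_assoc]
          _ = (e * f) * inv (e * f) * (e * f) := by rw [he, hf]
          _ = e * f := h1
      · calc f * inv (e * f) * e * (e * f) * (f * inv (e * f) * e)
            = f * (inv (e * f) * ((e * e) * (f * f)) * inv (e * f)) * e := by
              simp only [mul_assoc]
          _ = f * (inv (e * f) * (e * f) * inv (e * f)) * e := by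
              rw [he, hf]
          _ = f * inv (e * f) * e := by rw [h2]
    have hxx : inv (e * f) * inv (e * f) = inv (e * f) := by
      conv_lhs => rw [← hfxe]
      calc (f * inv (e * f) * e) * (f * inv (e * f) * e)
          = f * (inv (e * f) * (e * f) * inv (e * f)) * e := by
            simp only [mul_assoc]
        _ = f * inv (e * f) * e := by rw [h2]
        _ = inv (e * f) := hfxe
    have : e * f = inv (e * f) := by
      conv_lhs => rw [← inv_inv (e * f)]
      rw [inv_idem _ hxx]
    rw [this]; exact hxx
  have comm : ∀ e f : S, e * e = e → f * f = f → e * f = f * e := by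
    intro e f he hf
    have hef := idem_mul e f he hf
    have hfe := idem_mul f e hf he
    have h : e * f = inv (f * e) := by
      refine huniq (f * e) (e * f) ⟨?_, ?_⟩
      · calc f * e * (e * f) * (f * e)
            = f * ((e * e) * (f * f)) * e := by simp only [mul_assoc]
          _ = f * (e * f) * e := by rw [he, hf]
          _ = (f * e) * (f * e) := by simp only [mul_assoc]
          _ = f * e := hfe
      · calc e * f * (f * e) * (e * f)
            = e * ((f * f) * (e * e)) * f := by simp only [mul_assoc]
          _ = e * (f * e) * f := by rw [he, hf]
          _ = (e * f) * (e * f) := by simp only [mul_assoc]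
          _ = e * f := hef
    rw [h, inv_idem _ hfe]
  -- idempotents we will use
  have hss : (inv s * s) * (inv s * s) = inv s * s := by
    calc (inv s * s) * (inv s * s) = (inv s * s * inv s) * s := by simp only [mul_assoc]
      _ = inv s * s := by rw [(hinv s).2]
  have hss' : (s * inv s) * (s * inv s) = s * inv s := by
    calc (s * inv s) * (s * inv s) = (s * inv s * s) * inv s := by simp only [mul_assoc]
      _ = s * inv s := by rw [(hinv s).1]
  refine ⟨hs1 m hm, ?_⟩
  intro k hk
  obtain ⟨e, he, hme⟩ := hmin _ (hs2 k hk)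
  have hkk : (inv k * k) * (inv k * k) = inv k * k := by
    calc (inv k * k) * (inv k * k) = (inv k * k * inv k) * k := by simp only [mul_assoc]
      _ = inv k * k := by rw [(hinv k).2]
  -- a = s⁻¹ e s, b = k (s⁻¹ s) k⁻¹
  set a := inv s * e * s with ha
  set b := k * (inv s * s) * inv k with hb
  have haa : a * a = a := by
    calc a * a = inv s * (e * (s * inv s)) * (e * s) := by
          rw [ha]; simp only [mul_assoc]
      _ = inv s * ((s * inv s) * e) * (e * s) := by rw [comm e (s * inv s) he hss']
      _ = (inv s * s * inv s) * ((e * e) * s) := by simp only [mul_assoc]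
      _ = inv s * (e * s) := by rw [(hinv s).2, he]
      _ = a := by rw [ha, mul_assoc]
  have hbb : b * b = b := by
    calc b * b = k * ((inv s * s) * (inv k * k) * ((inv s * s) * inv k)) := by
          rw [hb]; simp only [mul_assoc]
      _ = k * ((inv k * k) * (inv s * s) * ((inv s * s) * inv k)) := by
          rw [comm (inv s * s) (inv k * k) hss hkk]
      _ = (k * inv k * k) * ((inv s * s) * (inv s * s) * inv k) := by
          simp only [mul_assoc]
      _ = k * ((inv s * s) * inv k) := by rw [(hinv k).1, hss]
      _ = b := by rw [hb]; simp only [mul_assoc]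
  refine ⟨a * b, ?_, ?_⟩
  · calc (a * b) * (a * b) = a * (b * a) * b := by simp only [mul_assoc]
      _ = a * (a * b) * b := by rw [comm b a hbb haa]
      _ = (a * a) * (b * b) := by simp only [mul_assoc]
      _ = a * b := by rw [haa, hbb]
  · calc inv s * m * s = inv s * (e * (s * k * inv s)) * s := by rw [hme]
      _ = inv s * e * s * (k * (inv s * s)) := by simp only [mul_assoc]
      _ = inv s * e * s * (k * ((inv s * s) * (inv k * k))) := by
          have hkf : k * ((inv s * s) * (inv k * k)) = k * (inv s * s) := by
            calc k * ((inv s * s) * (inv k * k))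
                = k * ((inv k * k) * (inv s * s)) := by
                  rw [comm (inv s * s) (inv k * k) hss hkk]
              _ = (k * inv k * k) * (inv s * s) := by simp only [mul_assoc]
              _ = k * (inv s * s) := by rw [(hinv k).1]
          rw [hkf]
      _ = (a * b) * k := by rw [ha, hb]; simp only [mul_assoc]
end
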